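/- arXiv:1408.6198 — 3 statements merged into one kernel-verified Lean document; each statement's English description precedes it below -/
import Mathlib

section
/- For the seed π = #_⋯_# (one #, then r letters _, then one #) over 𝒜 = {0,1}, no two distinct non-final states of the subset seed automaton S_π are equivalent: for any two distinct non-final states q' and q'' there exists a word W ∈ {0,1}^* such that exactly one of the two states reached by reading W from q' and by reading W from q'' is the final state. -/
/-!
A non-final state `⟨X,t⟩` of `S_π` for `π = #_⋯_#` is determined by the set
`{1,…,t} ∪ (X + t)` of lengths `d` such that the last `d` letters read match the prefix
`π_1⋯π_d`. Reading `0^(r+1-d)` shifts these lengths by `r+1-d`, discarding those beyond `r+1`,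
and a following `1` completes a hit exactly when `r+1` is among them; so `0^(r+1-d) 1` leads to
the final state iff `d` belongs to the set. Since `X ⊆ {2,…,r+1}`, the number `t + 1` is the
least length missing from the set, so both `t` and `X` can be read off it: distinct states have
distinct sets, and a length `d` in exactly one of them yields the distinguishing word.
-/

variable {A : Type*}

/-- One transition of the subset seed automaton `S_π`: the state `none` is the final sink
state, a state `some (X, t)` is the non-final state `⟨X,t⟩`. -/
def seedStep [DecidableEq A] (one : A) (π : ℕ → Finset A) (s : ℕ) :
    Option (Finset ℕ × ℕ) → A → Option (Finset ℕ × ℕ)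
  | none, _ => none
  | some (X, t), a =>
    if a = one then
      if X.sup id + (t + 1) = s then none else some (X, t + 1)
    else
      let Y : Finset ℕ := ((Finset.Icc 1 (t + 1)).filter fun x => a ∈ π x) ∪
        ((X.filter fun x => x + t + 1 ≤ s ∧ a ∈ π (x + t + 1)).image fun x => x + t + 1)
      if Y.sup id = s then none else some (Y, 0)

/-- Reading a word from a state, applying transitions letter by letter. -/
def seedRead [DecidableEq A] (one : A) (π : ℕ → Finset A) (s : ℕ)
    (q : Option (Finset ℕ × ℕ)) (w : List A) : Option (Finset ℕ × ℕ) :=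
  w.foldl (seedStep one π s) q

/-- `π` matches the alignment `w` at the (1-based) position `p`. -/
def seedMatches (one : A) (π : ℕ → Finset A) (s : ℕ) (w : List A) (p : ℕ) : Prop :=
  1 ≤ p ∧ p + s ≤ w.length + 1 ∧
    ∀ i, 1 ≤ i → i ≤ s → w.getD (p + i - 2) one ∈ π i


/-- The seed `#_⋯_#` (one `#`, then `r` letters `_`, then one `#`) over the alphabet
`𝒜 = {0,1}` modelled by `Bool` with `1 = true` and `0 = false`: position `1` and
position `r+2` carry `# = {1}`, all other positions carry `_ = {0,1}`.
Its span is `s = r+2` and `R_π = {2,…,r+1}`. -/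
def hrSeed (r : ℕ) : ℕ → Finset Bool :=
  fun i => if i = 1 ∨ i = r + 2 then {true} else {false, true}

lemma false_mem_hrSeed_iff (r i : ℕ) : false ∈ hrSeed r i ↔ i ≠ 1 ∧ i ≠ r + 2 := by
  unfold hrSeed; split <;> simp <;> omega

lemma seedRead_append [DecidableEq A] (one : A) (π : ℕ → Finset A) (s : ℕ)
    (q : Option (Finset ℕ × ℕ)) (w₁ w₂ : List A) :
    seedRead one π s q (w₁ ++ w₂) = seedRead one π s (seedRead one π s q w₁) w₂ :=
  List.foldl_append

lemma Finset.sup_id_eq_iff_mem {P : Finset ℕ} {n : ℕ} (hn : n ≠ 0) (hP : P.sup id ≤ n) :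
    P.sup id = n ↔ n ∈ P := by
  refine ⟨fun h => ?_, fun h => le_antisymm hP (Finset.le_sup (f := id) h)⟩
  obtain ⟨b, hb, hbn⟩ := Finset.exists_mem_eq_sup P
    (Finset.nonempty_iff_ne_empty.mpr fun h0 => hn (by simp [← h, h0])) id
  rwa [← h, hbn]

/-- The lengths of the prefixes of `#_⋯_#` matched by the suffixes of what has been read, in
the state `⟨X,t⟩`. -/
def matchedPrefixes (X : Finset ℕ) (t : ℕ) : Finset ℕ :=
  Finset.Icc 1 t ∪ X.map (addRightEmbedding t)

lemma mem_matchedPrefixes {X : Finset ℕ} {t d : ℕ} :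
    d ∈ matchedPrefixes X t ↔ (1 ≤ d ∧ d ≤ t) ∨ ∃ x ∈ X, x + t = d := by
  simp [matchedPrefixes]

lemma matchedPrefixes_zero (X : Finset ℕ) : matchedPrefixes X 0 = X := by
  ext; simp [mem_matchedPrefixes]; omega

lemma sup_matchedPrefixes (X : Finset ℕ) (t : ℕ) :
    (matchedPrefixes X t).sup id = X.sup id + t := by
  apply le_antisymm
  · refine Finset.sup_le fun d hd => ?_
    rcases mem_matchedPrefixes.mp hd with h | ⟨x, hx, rfl⟩
    · exact h.2.trans (Nat.le_add_left _ _)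
    · exact Nat.add_le_add_right (Finset.le_sup (f := id) hx) t
  · rcases X.eq_empty_or_nonempty with rfl | hX
    · rcases t.eq_zero_or_pos with rfl | ht
      · simp
      · simpa using Finset.le_sup (f := id) (mem_matchedPrefixes.mpr (Or.inl ⟨ht, le_rfl⟩))
    · obtain ⟨b, hb, hbs⟩ := Finset.exists_mem_eq_sup X hX id
      rw [hbs]
      exact Finset.le_sup (f := id) (mem_matchedPrefixes.mpr (Or.inr ⟨b, hb, rfl⟩))

lemma le_of_mem_matchedPrefixes {X : Finset ℕ} {t d : ℕ} (h : d ∈ matchedPrefixes X t) :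
    d ≤ X.sup id + t :=
  sup_matchedPrefixes X t ▸ Finset.le_sup (f := id) h

lemma succ_not_mem_matchedPrefixes {X : Finset ℕ} (hX : ∀ x ∈ X, 2 ≤ x) (t : ℕ) :
    t + 1 ∉ matchedPrefixes X t := by
  rw [mem_matchedPrefixes]
  rintro (h | ⟨x, hx, hxt⟩)
  · omega
  · have := hX x hx; omega

lemma add_mem_matchedPrefixes_iff {X : Finset ℕ} {x : ℕ} (hx : 2 ≤ x)
    (t : ℕ) : x + t ∈ matchedPrefixes X t ↔ x ∈ X := by
  rw [mem_matchedPrefixes]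
  constructor
  · rintro (h | ⟨y, hy, hyx⟩)
    · omega
    · rwa [← Nat.add_right_cancel hyx]
  · exact fun h => Or.inr ⟨x, h, rfl⟩

lemma matchedPrefixes_injective {X Y : Finset ℕ} {t u : ℕ} (hX : ∀ x ∈ X, 2 ≤ x)
    (hY : ∀ y ∈ Y, 2 ≤ y) (h : matchedPrefixes X t = matchedPrefixes Y u) : X = Y ∧ t = u := by
  have hIcc (Z : Finset ℕ) (v d : ℕ) (hd : 1 ≤ d ∧ d ≤ v) : d ∈ matchedPrefixes Z v :=
    mem_matchedPrefixes.mpr (Or.inl hd)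
  have htu : t = u := by
    by_contra hne
    rcases Nat.lt_or_gt_of_ne hne with hlt | hlt
    · exact succ_not_mem_matchedPrefixes hX t (h ▸ hIcc Y u (t + 1) ⟨by omega, hlt⟩)
    · exact succ_not_mem_matchedPrefixes hY u (h ▸ hIcc X t (u + 1) ⟨by omega, hlt⟩)
  subst htu
  refine ⟨Finset.ext fun x => ?_, rfl⟩
  by_cases hx : 2 ≤ x
  · rw [← add_mem_matchedPrefixes_iff hx, ← add_mem_matchedPrefixes_iff hx, h]
  · exact iff_of_false (fun h => hx (hX x h)) (fun h => hx (hY x h))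

def shiftWithin (n j : ℕ) (P : Finset ℕ) : Finset ℕ :=
  (P.map (addRightEmbedding j)).filter (· ≤ n)

lemma mem_shiftWithin {n j e : ℕ} {P : Finset ℕ} :
    e ∈ shiftWithin n j P ↔ e ≤ n ∧ ∃ a ∈ P, a + j = e := by
  simp [shiftWithin, and_comm]

lemma shiftWithin_shiftWithin (n i j : ℕ) (P : Finset ℕ) :
    shiftWithin n j (shiftWithin n i P) = shiftWithin n (i + j) P := by
  ext
  simp only [mem_shiftWithin]
  constructor
  · rintro ⟨he, b, ⟨-, a, ha, rfl⟩, rfl⟩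
    exact ⟨he, a, ha, by omega⟩
  · rintro ⟨he, a, ha, rfl⟩
    exact ⟨he, a + i, ⟨by omega, a, ha, rfl⟩, by omega⟩

lemma sup_shiftWithin_le (n j : ℕ) (P : Finset ℕ) : (shiftWithin n j P).sup id ≤ n :=
  Finset.sup_le fun _ he => (mem_shiftWithin.mp he).1

section HrSeed

variable {r : ℕ} {X : Finset ℕ} {t : ℕ}

local notation "step" => seedStep true (hrSeed r) (r + 2)
local notation "read" => seedRead true (hrSeed r) (r + 2)

lemma seedStep_true_eq_none_iff (hb : X.sup id + t ≤ r + 1) :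
    step (some (X, t)) true = none ↔ r + 1 ∈ matchedPrefixes X t := by
  rw [← Finset.sup_id_eq_iff_mem r.succ_ne_zero (sup_matchedPrefixes X t ▸ hb),
    sup_matchedPrefixes]
  simp only [seedStep, if_true]
  split_ifs <;> simp <;> omega

lemma seedStep_false (hX : 0 ∉ X) (ht : t ≤ r + 1) :
    step (some (X, t)) false = some (shiftWithin (r + 1) 1 (matchedPrefixes X t), 0) := by
  have hY : ((Finset.Icc 1 (t + 1)).filter fun x => false ∈ hrSeed r x) ∪
      ((X.filter fun x => x + t + 1 ≤ r + 2 ∧ false ∈ hrSeed r (x + t + 1)).image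
        fun x => x + t + 1) = shiftWithin (r + 1) 1 (matchedPrefixes X t) := by
    ext e
    simp only [Finset.mem_union, Finset.mem_filter, Finset.mem_image, Finset.mem_Icc,
      false_mem_hrSeed_iff, mem_shiftWithin, mem_matchedPrefixes]
    constructor
    · rintro (⟨⟨h1, h2⟩, h3⟩ | ⟨x, ⟨hx, hle, hne⟩, rfl⟩)
      · exact ⟨by omega, e - 1, Or.inl (by omega), by omega⟩
      · exact ⟨by omega, x + t, Or.inr ⟨x, hx, rfl⟩, by omega⟩
    · rintro ⟨he, a, (ha | ⟨x, hx, rfl⟩), rfl⟩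
      · exact Or.inl ⟨by omega, by omega⟩
      · have : x ≠ 0 := fun h => hX (h ▸ hx)
        exact Or.inr ⟨x, ⟨hx, by omega, by omega⟩, by omega⟩
  have hne : (shiftWithin (r + 1) 1 (matchedPrefixes X t)).sup id ≠ r + 2 :=
    (sup_shiftWithin_le _ _ _).trans_lt (Nat.lt_succ_self _) |>.ne
  simp only [seedStep, Bool.false_eq_true, if_false, hY, hne]

lemma seedRead_replicate_false (hX : 0 ∉ X) (ht : t ≤ r + 1) {j : ℕ} (hj : 1 ≤ j) :
    read (some (X, t)) (List.replicate j false) =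
      some (shiftWithin (r + 1) j (matchedPrefixes X t), 0) := by
  induction j, hj using Nat.le_induction with
  | base => simpa [seedRead] using seedStep_false hX ht
  | succ j hj ih =>
    have hY : 0 ∉ shiftWithin (r + 1) j (matchedPrefixes X t) := fun h => by
      obtain ⟨-, a, -, ha⟩ := mem_shiftWithin.mp h; omega
    rw [List.replicate_succ', seedRead_append, ih]
    simpa [seedRead, matchedPrefixes_zero, shiftWithin_shiftWithin] using
      seedStep_false hY (r.zero_le.trans r.le_succ)

lemma seedRead_zeros_one_eq_none_iff (hX : 0 ∉ X) (hb : X.sup id + t ≤ r + 1) {d : ℕ}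
    (hd : d ≤ r + 1) :
    read (some (X, t)) (List.replicate (r + 1 - d) false ++ [true]) = none ↔
      d ∈ matchedPrefixes X t := by
  rcases hd.eq_or_lt with rfl | hd
  · simpa [seedRead] using seedStep_true_eq_none_iff hb
  · rw [seedRead_append, seedRead_replicate_false hX (by omega) (by omega)]
    simp only [seedRead, List.foldl_cons, List.foldl_nil]
    rw [seedStep_true_eq_none_iff (by simpa using sup_shiftWithin_le _ _ _),
      matchedPrefixes_zero, mem_shiftWithin]
    constructor
    · rintro ⟨-, a, ha, hae⟩
      rwa [show d = a by omega]
    · exact fun h => ⟨le_rfl, d, h, by omega⟩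

end HrSeed

/-- For the seed `π = #_⋯_#` over `{0,1}`, no two distinct non-final states of `S_π` are
equivalent: there is a word `W` such that exactly one of the states reached by reading `W`
from the two states is the final state. -/
theorem stmt_6 (r : ℕ) (X' X'' : Finset ℕ) (t' t'' : ℕ)
    (hX' : X' ⊆ Finset.Icc 2 (r + 1)) (hb' : X'.sup id + t' ≤ r + 1)
    (hX'' : X'' ⊆ Finset.Icc 2 (r + 1)) (hb'' : X''.sup id + t'' ≤ r + 1)
    (hne : (X', t') ≠ (X'', t'')) :
    ∃ W : List Bool,
      Xor' (seedRead true (hrSeed r) (r + 2) (some (X', t')) W = none)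
        (seedRead true (hrSeed r) (r + 2) (some (X'', t'')) W = none) := by
  have two_le {X : Finset ℕ} (hX : X ⊆ Finset.Icc 2 (r + 1)) (x : ℕ) (hx : x ∈ X) : 2 ≤ x :=
    (Finset.mem_Icc.mp (hX hx)).1
  obtain ⟨d, hd⟩ : ∃ d, ¬(d ∈ matchedPrefixes X' t' ↔ d ∈ matchedPrefixes X'' t'') := by
    by_contra! h
    obtain ⟨rfl, rfl⟩ := matchedPrefixes_injective (two_le hX') (two_le hX'') (Finset.ext h)
    exact hne rfl
  have hdr : d ≤ r + 1 := by
    by_cases h : d ∈ matchedPrefixes X' t'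
    · exact (le_of_mem_matchedPrefixes h).trans hb'
    · exact (le_of_mem_matchedPrefixes (by tauto)).trans hb''
  refine ⟨List.replicate (r + 1 - d) false ++ [true], (xor_iff_not_iff _ _).mpr ?_⟩
  rw [seedRead_zeros_one_eq_none_iff (fun h => by simpa using hX' h) hb' hdr,
    seedRead_zeros_one_eq_none_iff (fun h => by simpa using hX'' h) hb'' hdr]
  exact hd
end

section
/- For the seed π = #_⋯_# over 𝒜 = {0,1}, let ⟨X,t⟩ be a non-final state of S_π with X = {x_1 < x_2 < ⋯ < x_k} nonempty. Define the word A = a_1⋯a_{x_k} ∈ {0,1}^{x_k} by a_p = 1 if p = x_k − x_i + 1 for some i ∈ [1..k], and a_p = 0 otherwise. Then reading the word A·1^t from the initial state ⟨∅,0⟩ of S_π ends exactly in the state ⟨X,t⟩. -/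
variable {A : Type*}

lemma false_mem_hrSeed (r x : ℕ) : (false ∈ hrSeed r x) ↔ ¬(x = 1 ∨ x = r + 2) := by
  unfold hrSeed
  split_ifs with h <;> simp [h]

lemma seedStep_one {A : Type*} [DecidableEq A] (one : A) (π : ℕ → Finset A) (s : ℕ)
    (X : Finset ℕ) (t : ℕ) (h : X.sup id + (t + 1) ≠ s) :
    seedStep one π s (some (X, t)) one = some (X, t + 1) := by
  simp [seedStep, h]

lemma seedStep_ne {A : Type*} [DecidableEq A] {one a : A} (π : ℕ → Finset A) (s : ℕ)
    (X : Finset ℕ) (t : ℕ) (ha : a ≠ one)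
    (h : (((Finset.Icc 1 (t + 1)).filter fun x => a ∈ π x) ∪
        ((X.filter fun x => x + t + 1 ≤ s ∧ a ∈ π (x + t + 1)).image
          fun x => x + t + 1)).sup id ≠ s) :
    seedStep one π s (some (X, t)) a =
      some (((Finset.Icc 1 (t + 1)).filter fun x => a ∈ π x) ∪
        ((X.filter fun x => x + t + 1 ≤ s ∧ a ∈ π (x + t + 1)).image
          fun x => x + t + 1), 0) := by
  simp only [seedStep, if_neg ha, if_neg h]

/-- For the seed `π = #_⋯_#` over `{0,1}`, given a non-final state `⟨X,t⟩` with
`X = {x_1 < ⋯ < x_k}` nonempty, the word `A = a_1⋯a_{x_k}` with `a_p = 1` iff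
`p = x_k - x_i + 1` for some `i`, followed by `1^t`, leads from the initial state `⟨∅,0⟩`
exactly to the state `⟨X,t⟩`. -/
theorem stmt_7 (r : ℕ) (X : Finset ℕ) (t : ℕ)
    (hX : X ⊆ Finset.Icc 2 (r + 1)) (hne : X.Nonempty) (hb : X.sup id + t ≤ r + 1) :
    seedRead true (hrSeed r) (r + 2) (some (∅, 0))
        ((List.ofFn fun j : Fin (X.sup id) =>
            decide (∃ x ∈ X, (j : ℕ) + 1 = X.sup id + 1 - x)) ++
          List.replicate t true) = some (X, t) := by
  classical
  set m := X.sup id with hm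
  have hmem : ∀ x ∈ X, 2 ≤ x ∧ x ≤ r + 1 := fun x hx => Finset.mem_Icc.mp (hX hx)
  have hxle : ∀ x ∈ X, x ≤ m := fun x hx => Finset.le_sup (f := id) hx
  obtain ⟨x0, hx0⟩ := hne
  have h2m : 2 ≤ m := le_trans (hmem x0 hx0).1 (hxle x0 hx0)
  have hmr : m ≤ r + 1 := le_trans (Nat.le_add_right m t) hb
  set f : Fin m → Bool := fun j => decide (∃ x ∈ X, (j : ℕ) + 1 = m + 1 - x) with hf
  -- main invariant on prefixes of the word `A`
  have key : ∀ p, p ≤ m →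
      ∃ q, q ≤ p ∧ (q = 0 ∨ m + 1 - q ∉ X) ∧ (∀ i, q < i → i ≤ p → m + 1 - i ∈ X) ∧
        seedRead true (hrSeed r) (r + 2) (some (∅, 0)) ((List.ofFn f).take p)
          = some ((Finset.Icc 1 (r + 1)).filter fun x => x + (m - q) ∈ X, p - q) := by
    intro p
    induction p with
    | zero =>
      intro _
      refine ⟨0, le_refl 0, Or.inl rfl, by omega, ?_⟩
      have hemp : ((Finset.Icc 1 (r + 1)).filter fun x => x + m ∈ X) = ∅ := by
        ext x
        simp only [Finset.mem_filter, Finset.mem_Icc, Finset.notMem_empty, iff_false,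
          not_and]
        rintro ⟨h1, _⟩ hmemX
        have := hxle _ hmemX
        omega
      simp [seedRead, hemp]
    | succ p ih =>
      intro hp1
      obtain ⟨q, hqp, hqn, hall, hst⟩ := ih (by omega)
      have hplt : p < m := hp1
      have htake : (List.ofFn f).take (p + 1) = (List.ofFn f).take p ++ [f ⟨p, hplt⟩] := by
        rw [List.take_succ]
        congr
        rw [List.getElem?_eq_getElem (by simpa using hplt)]
        simp
      have hread : seedRead true (hrSeed r) (r + 2) (some (∅, 0))
          ((List.ofFn f).take p ++ [f ⟨p, hplt⟩])
          = seedStep true (hrSeed r) (r + 2)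
              (some ((Finset.Icc 1 (r + 1)).filter fun x => x + (m - q) ∈ X, p - q))
              (f ⟨p, hplt⟩) := by
        have hst' := hst
        rw [seedRead] at hst'
        rw [seedRead, List.foldl_append, hst']
        rfl
      have hsup : ((Finset.Icc 1 (r + 1)).filter fun x => x + (m - q) ∈ X).sup id ≤ q := by
        apply Finset.sup_le
        intro x hx
        rw [Finset.mem_filter, Finset.mem_Icc] at hx
        have := hxle _ hx.2
        simp only [id]
        omega
      by_cases hmp : m - p ∈ X
      · -- next letter is `true`
        have hfl : f ⟨p, hplt⟩ = true := by
          simp only [hf, decide_eq_true_eq]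
          exact ⟨m - p, hmp, by omega⟩
        refine ⟨q, by omega, hqn, ?_, ?_⟩
        · intro i h1 h2
          rcases Nat.lt_or_ge i (p + 1) with h | h
          · exact hall i h1 (by omega)
          · have hi : i = p + 1 := by omega
            have : m + 1 - i = m - p := by omega
            rw [this]; exact hmp
        · rw [htake, hread, hfl, seedStep_one _ _ _ _ _ (by omega)]
          have : p + 1 - q = p - q + 1 := by omega
          rw [this]
      · -- next letter is `false`
        have hfl : f ⟨p, hplt⟩ = false := by
          simp only [hf, decide_eq_false_iff_not]
          rintro ⟨x, hxX, hxe⟩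
          have h1 := hxle x hxX
          have h2 := (hmem x hxX).1
          have : x = m - p := by omega
          rw [this] at hxX
          exact hmp hxX
        refine ⟨p + 1, le_refl _, Or.inr (by
          have : m + 1 - (p + 1) = m - p := by omega
          rw [this]; exact hmp), by omega, ?_⟩
        rw [htake, hread, hfl]
        have hYZ : ((Finset.Icc 1 (p - q + 1)).filter fun x => false ∈ hrSeed r x) ∪
            ((((Finset.Icc 1 (r + 1)).filter fun x => x + (m - q) ∈ X).filter
              fun x => x + (p - q) + 1 ≤ r + 2 ∧ false ∈ hrSeed r (x + (p - q) + 1)).image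
              fun x => x + (p - q) + 1)
            = (Finset.Icc 1 (r + 1)).filter fun x => x + (m - (p + 1)) ∈ X := by
          ext x
          simp only [Finset.mem_union, Finset.mem_filter, Finset.mem_image, Finset.mem_Icc,
            false_mem_hrSeed, not_or]
          constructor
          · rintro (⟨⟨h1, h2⟩, hne1, hne2⟩ | ⟨x', ⟨⟨⟨h1, h2⟩, hX'⟩, hle, hne1, hne2⟩, heq⟩)
            · refine ⟨⟨h1, by omega⟩, ?_⟩
              have hmem' := hall (p + 2 - x) (by omega) (by omega)
              have : m + 1 - (p + 2 - x) = x + (m - (p + 1)) := by omega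
              rwa [this] at hmem'
            · refine ⟨⟨by omega, by omega⟩, ?_⟩
              have : x + (m - (p + 1)) = x' + (m - q) := by omega
              rwa [this]
          · rintro ⟨⟨h1, h2⟩, hXx⟩
            rcases Nat.lt_or_ge (p - q + 1) x with h | h
            · right
              refine ⟨x - (p - q) - 1, ⟨⟨⟨by omega, by omega⟩, ?_⟩, by omega, by omega,
                by omega⟩, by omega⟩
              have : x - (p - q) - 1 + (m - q) = x + (m - (p + 1)) := by omega
              rwa [this]
            · left
              have hx1 : x ≠ 1 := by
                rintro rfl
                have : 1 + (m - (p + 1)) = m - p := by omega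
                rw [this] at hXx
                exact hmp hXx
              exact ⟨⟨h1, h⟩, hx1, by omega⟩
        have hsupZ : ((Finset.Icc 1 (r + 1)).filter fun x => x + (m - (p + 1)) ∈ X).sup id
            ≤ r + 1 := by
          apply Finset.sup_le
          intro x hx
          rw [Finset.mem_filter, Finset.mem_Icc] at hx
          simpa using hx.1.2
        rw [seedStep_ne _ _ _ _ (by simp) (by rw [hYZ]; omega), hYZ]
        have : p + 1 - (p + 1) = 0 := by omega
        rw [this]
  -- end state after reading `A`
  obtain ⟨q, hqm, hqn, hall, hst⟩ := key m le_rfl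
  have hq : q = m := by
    by_contra h
    have hqlt : q < m := lt_of_le_of_ne hqm h
    have h1X : m + 1 - m ∈ X := hall m hqlt le_rfl
    have := (hmem _ h1X).1
    omega
  rw [hq] at hst
  have hfX : ((Finset.Icc 1 (r + 1)).filter fun x => x + (m - m) ∈ X) = X := by
    ext x
    simp only [Finset.mem_filter, Finset.mem_Icc, Nat.sub_self, Nat.add_zero]
    constructor
    · exact fun h => h.2
    · intro h
      have := hmem x h
      exact ⟨⟨by omega, this.2⟩, h⟩
  rw [hfX] at hst
  have htake : (List.ofFn f).take m = List.ofFn f :=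
    List.take_of_length_le (by simp)
  rw [htake, Nat.sub_self] at hst
  -- reading the trailing `1^t`
  have rep : ∀ j i, m + i + j ≤ r + 1 →
      seedRead true (hrSeed r) (r + 2) (some (X, i)) (List.replicate j true)
        = some (X, i + j) := by
    intro j
    induction j with
    | zero => intro i _; simp [seedRead]
    | succ j ih =>
      intro i h
      rw [List.replicate_succ]
      have hstep : seedStep true (hrSeed r) (r + 2) (some (X, i)) true = some (X, i + 1) := by
        apply seedStep_one
        rw [← hm]
        omega
      have : seedRead true (hrSeed r) (r + 2) (some (X, i)) (true :: List.replicate j true)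
          = seedRead true (hrSeed r) (r + 2) (some (X, i + 1)) (List.replicate j true) := by
        rw [seedRead, List.foldl_cons, hstep, ← seedRead]
      rw [this, ih (i + 1) (by omega)]
      congr 2
      omega
  rw [seedRead, List.foldl_append, ← seedRead, ← seedRead, hst, rep t 0 (by omega),
    Nat.zero_add]
end

section
/- The map sending an Aho–Corasick state to the S_π-state reached by reading it is an automaton morphism: for every non-final state A ∈ Q_AC of the Aho–Corasick automaton of π and every letter a ∈ 𝒜, the state of S_π reached by reading the word Aa from the initial state of S_π equals the state of S_π reached by reading the longest suffix of Aa that belongs to Q_AC (i.e., reading the Aho–Corasick transition target of (A,a)); moreover, if the Aho–Corasick transition target is its final state then reading Aa in S_π ends in the final state of S_π. -/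
variable {A : Type*}

/-- A word `C` is a state of the Aho–Corasick automaton of `π` (before merging final
states): `|C| ≤ s` and `C` is matched by the prefix `π_1⋯π_{|C|}`. -/
def acState (π : ℕ → Finset A) (s : ℕ) (C : List A) : Prop :=
  C.length ≤ s ∧ ∀ i (h : i < C.length), C.get ⟨i, h⟩ ∈ π (i + 1)

/-!
Reading a word `w = u·1^t` of length at most `s`, with `u` not ending in `1`, from the initial
state of `S_π` leads to `⟨X, t⟩`, where `X` is the set of lengths `x ≥ 1` of the suffixes of `u`
that are Aho–Corasick states, unless `w` itself is an occurrence of `π`, in which case it leads to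
the final state. Moreover `x ∈ X` iff `x + t` is such a suffix length of `w` itself. When `C` is the longest suffix of `w = B·a` in `Q_AC`, every suffix of `w` in `Q_AC` is a
suffix of `C`, and so is `1^t`, so `w` and `C` have the same suffix lengths and the same `t`.
-/

namespace List

variable {α : Type*}

theorem length_rtake (l : List α) (n : ℕ) : (l.rtake n).length = min n l.length := by
  simp only [rtake, length_drop]
  omega

theorem rtake_append (l₁ l₂ : List α) (n : ℕ) :
    (l₁ ++ l₂).rtake n = l₁.rtake (n - l₂.length) ++ l₂.rtake n := by
  simp only [rtake, drop_append, length_append]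
  by_cases hn : n ≤ l₂.length
  · rw [drop_of_length_le (l := l₁) (by omega), drop_of_length_le (l := l₁) (by omega)]
    congr 2
    omega
  · congr 2 <;> omega

theorem rtake_replicate (a : α) (t n : ℕ) : (replicate t a).rtake n = replicate (min n t) a := by
  simp only [rtake, drop_replicate, length_replicate]
  congr 1
  omega

theorem IsSuffix.rtake_eq {l₁ l₂ : List α} (h : l₁ <:+ l₂) {n : ℕ} (hn : n ≤ l₁.length) :
    l₁.rtake n = l₂.rtake n := by
  obtain ⟨z, rfl⟩ := h
  simp [rtake_append, show n - l₁.length = 0 by omega, rtake_zero]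

theorem rtakeWhile_append_of_length_le (p : α → Bool) (l₁ l₂ : List α)
    (h : ((l₁ ++ l₂).rtakeWhile p).length ≤ l₂.length) :
    (l₁ ++ l₂).rtakeWhile p = l₂.rtakeWhile p := by
  induction l₂ using reverseRecOn with
  | nil => simpa using h
  | append_singleton l₂ x ih =>
    rw [← append_assoc] at h ⊢
    by_cases hx : p x
    · rw [rtakeWhile_concat_pos p _ x hx] at h ⊢
      rw [rtakeWhile_concat_pos p _ x hx, ih (by simpa using h)]
    · rw [rtakeWhile_concat_neg p _ x hx, rtakeWhile_concat_neg p _ x hx]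

theorem IsSuffix.rtakeWhile_eq (p : α → Bool) {l₁ l₂ : List α} (h : l₁ <:+ l₂)
    (hl : (l₂.rtakeWhile p).length ≤ l₁.length) : l₁.rtakeWhile p = l₂.rtakeWhile p := by
  obtain ⟨z, rfl⟩ := h
  exact (rtakeWhile_append_of_length_le p z l₁ hl).symm

theorem rtakeWhile_eq_replicate [DecidableEq α] (c : α) (l : List α) :
    l.rtakeWhile (· = c) = replicate (l.rtakeWhile (· = c)).length c :=
  eq_replicate_iff.2 ⟨rfl, fun _ hb => by simpa using mem_rtakeWhile_imp hb⟩

end List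

section AhoCorasick

variable {π : ℕ → Finset A} {s : ℕ}

theorem acState_nil : acState π s [] :=
  ⟨Nat.zero_le s, fun _ h => absurd h (Nat.not_lt_zero _)⟩

theorem acState_append {v z : List A} :
    acState π s (v ++ z) ↔ acState π s v ∧ v.length + z.length ≤ s ∧
      ∀ i (h : i < z.length), z[i] ∈ π (v.length + i + 1) := by
  simp only [acState, List.length_append, List.get_eq_getElem]
  constructor
  · rintro ⟨hlen, h⟩
    refine ⟨⟨by omega, fun i hi => ?_⟩, hlen, fun i hi => ?_⟩
    · simpa [List.getElem_append_left hi] using h i (by omega)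
    · simpa [add_right_comm] using h (v.length + i) (by omega)
  · rintro ⟨⟨_, hv⟩, hlen, hz⟩
    refine ⟨hlen, fun i hi => ?_⟩
    by_cases hiv : i < v.length
    · simpa [List.getElem_append_left hiv] using hv i hiv
    · have hvi : v.length ≤ i := Nat.le_of_not_lt hiv
      simpa [List.getElem_append_right hvi, Nat.add_sub_cancel' hvi] using
        hz (i - v.length) (by omega)

theorem acState_append_singleton {v : List A} {a : A} :
    acState π s (v ++ [a]) ↔ acState π s v ∧ v.length < s ∧ a ∈ π (v.length + 1) := by
  rw [acState_append]
  simp only [List.length_singleton, List.getElem_singleton, Nat.lt_iff_add_one_le]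
  exact and_congr_right fun _ => and_congr_right fun _ =>
    ⟨fun h => h 0 Nat.one_pos, fun h i hi => by rwa [Nat.lt_one_iff.1 hi]⟩

theorem acState_append_replicate {one : A} (hone : ∀ i, 1 ≤ i → i ≤ s → one ∈ π i)
    {v : List A} {t : ℕ} :
    acState π s (v ++ List.replicate t one) ↔ acState π s v ∧ v.length + t ≤ s := by
  simp only [acState_append, List.length_replicate, List.getElem_replicate]
  exact and_congr_right fun _ =>
    ⟨fun h => h.1, fun h => ⟨h, fun i hi => hone _ (by omega) (by omega)⟩⟩

theorem acState_replicate {one : A} (hone : ∀ i, 1 ≤ i → i ≤ s → one ∈ π i) {t : ℕ}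
    (ht : t ≤ s) : acState π s (List.replicate t one) := by
  simpa using (acState_append_replicate hone (v := []) (t := t)).2 ⟨acState_nil, by simpa⟩

end AhoCorasick

section SeedAutomaton

variable [DecidableEq A] (one : A) (π : ℕ → Finset A) (s : ℕ)

instance : DecidablePred (acState π s) := fun _ => by
  unfold acState
  infer_instance

def matchLengths (w : List A) : Finset ℕ :=
  (Finset.Icc 1 w.length).filter fun x => acState π s (w.rtake x)

def seedState (X : Finset ℕ) (t : ℕ) : Option (Finset ℕ × ℕ) :=
  if X.sup id + t = s then none else some (X, t)

/-- The set `X_U ∪ X_V` of the transition of `S_π` on a letter `a ≠ 1`. -/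
def seedJump (X : Finset ℕ) (t : ℕ) (a : A) : Finset ℕ :=
  ((Finset.Icc 1 (t + 1)).filter fun x => a ∈ π x) ∪
    ((X.filter fun x => x + t + 1 ≤ s ∧ a ∈ π (x + t + 1)).image fun x => x + t + 1)

def trailingOnes (w : List A) : ℕ := (w.rtakeWhile (· = one)).length

def seedStateOf (w : List A) : Option (Finset ℕ × ℕ) :=
  seedState s (matchLengths π s (w.rdropWhile (· = one))) (trailingOnes one w)

variable {one π s}

theorem mem_matchLengths {w : List A} {x : ℕ} :
    x ∈ matchLengths π s w ↔ 1 ≤ x ∧ x ≤ w.length ∧ acState π s (w.rtake x) := by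
  simp [matchLengths, and_assoc]

theorem matchLengths_nil : matchLengths π s ([] : List A) = ∅ := by
  simp [matchLengths]

theorem le_length_of_mem_matchLengths {w : List A} {x : ℕ} (hx : x ∈ matchLengths π s w) :
    x ≤ w.length :=
  (mem_matchLengths.1 hx).2.1

theorem sup_matchLengths_le_length (w : List A) : (matchLengths π s w).sup id ≤ w.length :=
  Finset.sup_le fun _ => le_length_of_mem_matchLengths

theorem sup_matchLengths_eq_length {w : List A} (hw : acState π s w) :
    (matchLengths π s w).sup id = w.length := by
  refine (sup_matchLengths_le_length w).antisymm ?_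
  rcases Nat.eq_zero_or_pos w.length with h | h
  · omega
  · refine Finset.le_sup (f := id) (mem_matchLengths.2 ⟨h, le_rfl, ?_⟩)
    simpa [List.rtake] using hw

theorem mem_matchLengths_append_singleton {w : List A} {a : A} {y : ℕ} :
    y ∈ matchLengths π s (w ++ [a]) ↔
      1 ≤ y ∧ y ≤ s ∧ a ∈ π y ∧ (y = 1 ∨ y - 1 ∈ matchLengths π s w) := by
  rcases Nat.eq_zero_or_pos y with rfl | hy
  · simp [mem_matchLengths]
  obtain ⟨k, rfl⟩ : ∃ k, y = k + 1 := ⟨y - 1, by omega⟩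
  simp only [mem_matchLengths, List.rtake_concat_succ, acState_append_singleton,
    List.length_append, List.length_singleton, List.length_rtake, Nat.add_sub_cancel]
  rcases Nat.eq_zero_or_pos k with rfl | hk
  · rw [List.rtake_zero, Nat.zero_min]
    exact ⟨fun ⟨_, _, _, hs, ha⟩ => ⟨le_rfl, hs, ha, Or.inl rfl⟩,
      fun ⟨_, hs, ha, _⟩ => ⟨le_rfl, by omega, acState_nil, hs, ha⟩⟩
  · constructor
    · rintro ⟨-, hkw, hacc, hks, ha⟩
      refine ⟨by omega, by omega, by rwa [min_eq_left (by omega)] at ha, Or.inr ⟨hk, by omega, hacc⟩⟩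
    · rintro ⟨-, hks, ha, h⟩
      obtain ⟨-, hkw, hacc⟩ := h.resolve_left (by omega)
      exact ⟨by omega, by omega, hacc, by omega, by rwa [min_eq_left hkw]⟩

theorem matchLengths_eq_of_suffix {v w : List A} (h : v <:+ w)
    (hv : ∀ x ∈ matchLengths π s w, x ≤ v.length) : matchLengths π s v = matchLengths π s w := by
  ext x
  constructor
  · intro hx
    obtain ⟨hx₁, hxv, hacc⟩ := mem_matchLengths.1 hx
    exact mem_matchLengths.2 ⟨hx₁, hxv.trans h.length_le, h.rtake_eq hxv ▸ hacc⟩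
  · intro hx
    obtain ⟨hx₁, -, hacc⟩ := mem_matchLengths.1 hx
    exact mem_matchLengths.2 ⟨hx₁, hv x hx, (h.rtake_eq (hv x hx)).symm ▸ hacc⟩

theorem mem_matchLengths_append_replicate (hone : ∀ i, 1 ≤ i → i ≤ s → one ∈ π i)
    {u : List A} {t x : ℕ} :
    x ∈ matchLengths π s (u ++ List.replicate t one) ↔
      1 ≤ x ∧ x ≤ s ∧ (x ≤ t ∨ x - t ∈ matchLengths π s u) := by
  simp only [mem_matchLengths, List.rtake_append, List.rtake_replicate, List.length_replicate,
    acState_append_replicate hone, List.length_append, List.length_rtake]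
  by_cases hxt : x ≤ t
  · rw [show x - t = 0 by omega, List.rtake_zero, Nat.zero_min, min_eq_left hxt, zero_add]
    exact ⟨fun ⟨hx, _, _, hxs⟩ => ⟨hx, hxs, Or.inl hxt⟩,
      fun ⟨hx, hxs, _⟩ => ⟨hx, by omega, acState_nil, hxs⟩⟩
  · constructor
    · rintro ⟨hx, hxl, hacc, hlen⟩
      exact ⟨hx, by omega, Or.inr ⟨by omega, by omega, hacc⟩⟩
    · rintro ⟨hx, hxs, h⟩
      obtain ⟨-, hxu, hacc⟩ := h.resolve_left hxt
      exact ⟨hx, by omega, hacc, by omega⟩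

theorem mem_matchLengths_iff_add_mem (hone : ∀ i, 1 ≤ i → i ≤ s → one ∈ π i) {u : List A}
    {t : ℕ} (hu : u.length + t ≤ s) {x : ℕ} :
    x ∈ matchLengths π s u ↔ 1 ≤ x ∧ x + t ∈ matchLengths π s (u ++ List.replicate t one) := by
  rw [mem_matchLengths_append_replicate hone, Nat.add_sub_cancel]
  constructor
  · intro hx
    have hx₁ := (mem_matchLengths.1 hx).1
    have := le_length_of_mem_matchLengths hx
    exact ⟨hx₁, by omega, by omega, Or.inr hx⟩
  · rintro ⟨hx, -, -, h⟩
    exact h.resolve_left (by omega)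

theorem seedJump_matchLengths (hone : ∀ i, 1 ≤ i → i ≤ s → one ∈ π i) (u : List A)
    {t : ℕ} (ht : t < s) (a : A) :
    seedJump π s (matchLengths π s u) t a =
      matchLengths π s (u ++ List.replicate t one ++ [a]) := by
  ext y
  simp only [seedJump, Finset.mem_union, Finset.mem_filter, Finset.mem_Icc, Finset.mem_image,
    mem_matchLengths_append_singleton, mem_matchLengths_append_replicate hone]
  constructor
  · rintro (⟨⟨hy, hyt⟩, ha⟩ | ⟨x, ⟨hx, hxs, ha⟩, rfl⟩)
    · exact ⟨hy, by omega, ha, by omega⟩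
    · have hx₁ := (mem_matchLengths.1 hx).1
      exact ⟨by omega, hxs, ha, Or.inr ⟨by omega, by omega, Or.inr (by simpa [Nat.sub_sub])⟩⟩
  · rintro ⟨hy, hys, ha, h⟩
    by_cases hyt : y ≤ t + 1
    · exact Or.inl ⟨⟨hy, hyt⟩, ha⟩
    · obtain ⟨-, -, hx⟩ := h.resolve_left (by omega)
      refine Or.inr ⟨y - 1 - t, ⟨hx.resolve_left (by omega), ?_⟩, by omega⟩
      exact ⟨by omega, by rwa [show y - 1 - t + t + 1 = y by omega]⟩

variable (one) in
theorem rdropWhile_append_replicate_trailingOnes (w : List A) :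
    w.rdropWhile (· = one) ++ List.replicate (trailingOnes one w) one = w := by
  rw [trailingOnes, ← List.rtakeWhile_eq_replicate]
  exact List.rdropWhile_append_rtakeWhile

variable (one) in
theorem length_rdropWhile_add_trailingOnes (w : List A) :
    (w.rdropWhile (· = one)).length + trailingOnes one w = w.length := by
  simpa using congrArg List.length (rdropWhile_append_replicate_trailingOnes one w)

theorem mem_matchLengths_rdropWhile (hone : ∀ i, 1 ≤ i → i ≤ s → one ∈ π i) {w : List A}
    (hw : w.length ≤ s) {x : ℕ} :
    x ∈ matchLengths π s (w.rdropWhile (· = one)) ↔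
      1 ≤ x ∧ x + trailingOnes one w ∈ matchLengths π s w := by
  have hlen := length_rdropWhile_add_trailingOnes one w
  have := mem_matchLengths_iff_add_mem hone (u := w.rdropWhile (· = one))
    (t := trailingOnes one w) (x := x) (by omega)
  rwa [rdropWhile_append_replicate_trailingOnes] at this

theorem seedStateOf_eq_some {w : List A} (hw : w.length < s) :
    seedStateOf one π s w =
      some (matchLengths π s (w.rdropWhile (· = one)), trailingOnes one w) := by
  have hlen := length_rdropWhile_add_trailingOnes one w
  have := sup_matchLengths_le_length (π := π) (s := s) (w.rdropWhile (· = one))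
  exact if_neg (by omega)

theorem seedStep_some (X : Finset ℕ) (t : ℕ) (a : A) :
    seedStep one π s (some (X, t)) a =
      if a = one then seedState s X (t + 1) else seedState s (seedJump π s X t a) 0 :=
  rfl

theorem seedRead_append_singleton (q : Option (Finset ℕ × ℕ)) (w : List A) (a : A) :
    seedRead one π s q (w ++ [a]) = seedStep one π s (seedRead one π s q w) a := by
  simp [seedRead, List.foldl_append]

theorem seedStep_seedStateOf (hone : ∀ i, 1 ≤ i → i ≤ s → one ∈ π i) {w : List A}
    (hw : w.length < s) (a : A) :
    seedStep one π s (seedStateOf one π s w) a = seedStateOf one π s (w ++ [a]) := by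
  rw [seedStateOf_eq_some hw, seedStep_some]
  by_cases ha : a = one
  · subst ha
    simp [seedStateOf, trailingOnes]
  · have ht : trailingOnes one w < s := by
      have := length_rdropWhile_add_trailingOnes one w
      omega
    rw [if_neg ha, seedJump_matchLengths hone _ ht, rdropWhile_append_replicate_trailingOnes]
    simp [seedStateOf, trailingOnes, ha]

theorem seedRead_init_eq_seedStateOf (hs : 0 < s) (hone : ∀ i, 1 ≤ i → i ≤ s → one ∈ π i) {w : List A}
    (hw : w.length ≤ s) : seedRead one π s (some (∅, 0)) w = seedStateOf one π s w := by
  induction w using List.reverseRecOn with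
  | nil =>
    rw [seedStateOf_eq_some hs]
    simp [seedRead, matchLengths_nil, trailingOnes]
  | append_singleton w a ih =>
    rw [List.length_append, List.length_singleton] at hw
    rw [seedRead_append_singleton, ih (by omega), seedStep_seedStateOf hone (by omega)]

theorem seedStateOf_eq_of_longest_suffix (hone : ∀ i, 1 ≤ i → i ≤ s → one ∈ π i)
    {w C : List A} (hw : w.length ≤ s) (hCw : C <:+ w)
    (hlongest : ∀ D, acState π s D → D <:+ w → D.length ≤ C.length) :
    seedStateOf one π s C = seedStateOf one π s w := by
  have hCs : C.length ≤ s := hCw.length_le.trans hw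
  have htw : trailingOnes one w ≤ C.length := by
    have hsuf : List.replicate (trailingOnes one w) one <:+ w :=
      ⟨_, rdropWhile_append_replicate_trailingOnes one w⟩
    simpa using hlongest _ (acState_replicate hone (by simpa using hsuf.length_le.trans hw)) hsuf
  have ht : trailingOnes one C = trailingOnes one w :=
    congrArg List.length (hCw.rtakeWhile_eq _ htw)
  have hM : matchLengths π s C = matchLengths π s w := by
    refine matchLengths_eq_of_suffix hCw fun x hx => ?_
    obtain ⟨-, hxw, hacc⟩ := mem_matchLengths.1 hx
    simpa [List.length_rtake, hxw] using hlongest _ hacc (List.drop_suffix _ _)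
  have hU : matchLengths π s (C.rdropWhile (· = one)) =
      matchLengths π s (w.rdropWhile (· = one)) := by
    ext x
    rw [mem_matchLengths_rdropWhile hone hCs, mem_matchLengths_rdropWhile hone hw, ht, hM]
  rw [seedStateOf, seedStateOf, hU, ht]

theorem seedStateOf_eq_none {w : List A} (hw : acState π s w) (hlen : w.length = s) :
    seedStateOf one π s w = none := by
  have hdecomp := rdropWhile_append_replicate_trailingOnes one w
  have hu : acState π s (w.rdropWhile (· = one)) := (acState_append.1 (hdecomp ▸ hw)).1
  have hlen' := length_rdropWhile_add_trailingOnes one w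
  rw [seedStateOf, seedState, if_pos (by rw [sup_matchLengths_eq_length hu]; omega)]

end SeedAutomaton

theorem stmt_12_general [DecidableEq A] (one : A) (π : ℕ → Finset A) (s : ℕ)
    (hone : ∀ i, 1 ≤ i → i ≤ s → one ∈ π i)
    (B : List A) (hBnf : B.length < s) (a : A)
    (C : List A) (hC : acState π s C) (hCsuf : C <:+ B ++ [a])
    (hClongest : ∀ D : List A, acState π s D → D <:+ B ++ [a] → D.length ≤ C.length) :
    (C.length < s →
        seedRead one π s (some (∅, 0)) (B ++ [a]) = seedRead one π s (some (∅, 0)) C) ∧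
      (C.length = s → seedRead one π s (some (∅, 0)) (B ++ [a]) = none) := by
  have hw : (B ++ [a]).length ≤ s := by simpa using hBnf
  rw [seedRead_init_eq_seedStateOf (by omega) hone hw]
  refine ⟨fun _ => ?_, fun hCs => ?_⟩
  · rw [seedRead_init_eq_seedStateOf (by omega) hone hC.1]
    exact (seedStateOf_eq_of_longest_suffix hone hw hCsuf hClongest).symm
  · rw [← hCsuf.eq_of_length (le_antisymm hCsuf.length_le (hCs ▸ hw))]
    exact seedStateOf_eq_none hC hCs

/-- The map sending an Aho–Corasick state to the `S_π`-state reached by reading it is an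
automaton morphism: for a non-final AC state `B` and a letter `a`, if `C` is the longest
suffix of `B·a` belonging to `Q_AC` (the AC transition target), then reading `B·a` in
`S_π` leads to the same state as reading `C`; and if `C` has length `s` (the AC target is
the final state) then reading `B·a` in `S_π` ends in the final state of `S_π`. -/
theorem stmt_12 [DecidableEq A] (one : A) (π : ℕ → Finset A) (s : ℕ)
    (hs : 1 ≤ s) (hone : ∀ i, 1 ≤ i → i ≤ s → one ∈ π i)
    (B : List A) (hB : acState π s B) (hBnf : B.length < s) (a : A)
    (C : List A) (hC : acState π s C) (hCsuf : C <:+ B ++ [a])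
    (hClongest : ∀ D : List A, acState π s D → D <:+ B ++ [a] → D.length ≤ C.length) :
    (C.length < s →
        seedRead one π s (some (∅, 0)) (B ++ [a]) = seedRead one π s (some (∅, 0)) C) ∧
      (C.length = s → seedRead one π s (some (∅, 0)) (B ++ [a]) = none) :=
  stmt_12_general one π s hone B hBnf a C hC hCsuf hClongest
end
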